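/- arXiv:1602.04126 — 9 statements merged into one kernel-verified Lean document; each statement's English description precedes it below -/
import Mathlib

section
/- If (C,P) is a primary doctrine with full comprehension and for every comprehension arrow ⌊α⌋ the reindexing functor ⌊α⌋* has a left adjoint satisfying Frobenius reciprocity, then (C,P) is a restricted Σ(C_P)-doctrine, i.e. these left adjoints satisfy the restricted Beck–Chevalley condition with respect to pullbacks of comprehension arrows. -/
open CategoryTheory CategoryTheory.Limits

universe w v u

/-- A doctrine: a contravariant functor from a category with finite products
to partially ordered sets, presented via a family of fibers `P` and monotone
reindexing maps. -/
structure Doctrine (C : Type u) [Category.{v} C] (P : C → Type w)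
    [∀ A, PartialOrder (P A)] where
  map : ∀ {X A : C}, (X ⟶ A) → P A → P X
  map_mono : ∀ {X A : C} (f : X ⟶ A) ⦃α β : P A⦄, α ≤ β → map f α ≤ map f β
  map_id : ∀ {A : C} (α : P A), map (𝟙 A) α = α
  map_comp : ∀ {X Y A : C} (f : X ⟶ Y) (g : Y ⟶ A) (α : P A),
    map (f ≫ g) α = map f (map g α)

variable {C : Type u} [Category.{v} C] {P : C → Type w}

/-- The opposite doctrine `P^o`, with fibers the opposite posets. -/
def Doctrine.op [∀ A, PartialOrder (P A)] (D : Doctrine C P) :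
    Doctrine C (fun A => (P A)ᵒᵈ) where
  map f α := OrderDual.toDual (D.map f (OrderDual.ofDual α))
  map_mono f _ _ h := D.map_mono f h
  map_id := D.map_id
  map_comp := D.map_comp

/-- Comprehension structure on a doctrine with fiberwise top elements. -/
structure Comprehension [∀ A, PartialOrder (P A)] [∀ A, OrderTop (P A)]
    (D : Doctrine C P) where
  cObj : ∀ {A : C}, P A → C
  cArr : ∀ {A : C} (α : P A), cObj α ⟶ A
  map_cArr : ∀ {A : C} (α : P A), D.map (cArr α) α = ⊤
  univ : ∀ {A Y : C} (α : P A) (f : Y ⟶ A), D.map f α = ⊤ →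
    ∃! k : Y ⟶ cObj α, k ≫ cArr α = f

/-- Fullness of comprehension: the functor `α ↦ ⌊α⌋` into subobjects is full. -/
def Comprehension.IsFull [∀ A, PartialOrder (P A)] [∀ A, OrderTop (P A)]
    {D : Doctrine C P} (cmp : Comprehension D) : Prop :=
  ∀ (A : C) (α β : P A) (g : cmp.cObj α ⟶ cmp.cObj β),
    g ≫ cmp.cArr β = cmp.cArr α → α ≤ β

/-- Co-comprehension structure on a doctrine with fiberwise bottom elements. -/
structure CoComprehension [∀ A, PartialOrder (P A)] [∀ A, OrderBot (P A)]
    (D : Doctrine C P) where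
  oObj : ∀ {A : C}, P A → C
  oArr : ∀ {A : C} (α : P A), oObj α ⟶ A
  map_oArr : ∀ {A : C} (α : P A), D.map (oArr α) α = ⊥
  univ : ∀ {A Y : C} (α : P A) (f : Y ⟶ A), D.map f α = ⊥ →
    ∃! k : Y ⟶ oObj α, k ≫ oArr α = f

/-- Fullness of co-comprehension: the contravariant functor `α ↦ ⌈α⌉` into
subobjects is full. -/
def CoComprehension.IsFull [∀ A, PartialOrder (P A)] [∀ A, OrderBot (P A)]
    {D : Doctrine C P} (co : CoComprehension D) : Prop :=
  ∀ (A : C) (α β : P A) (g : co.oObj β ⟶ co.oObj α),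
    g ≫ co.oArr α = co.oArr β → α ≤ β

/-- A stable initial object: an initial object `Z` with `X × Z ≅ Z` for all `X`. -/
def StableInitial [HasFiniteProducts C] (Z : C) : Prop :=
  Nonempty (IsInitial Z) ∧ ∀ X : C, Nonempty ((X ⨯ Z) ≅ Z)

/-- The axiom of choice for a doctrine: along every projection `π_Γ : Γ × A → Γ`
with `A` not a stable initial object, reindexing has a left adjoint, and every
`ψ ∈ P(Γ × A)` has a choice arrow `ε_ψ : Γ ⟶ A` with `Σ_{π_Γ}ψ = ⟨id, ε_ψ⟩*ψ`. -/
structure AxChoice [HasFiniteProducts C] [∀ A, PartialOrder (P A)]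
    (D : Doctrine C P) where
  Sig : ∀ (Γ A : C), ¬ StableInitial A → P (Γ ⨯ A) → P Γ
  adj : ∀ {Γ A : C} (h : ¬ StableInitial A) (ψ : P (Γ ⨯ A)) (β : P Γ),
    Sig Γ A h ψ ≤ β ↔ ψ ≤ D.map prod.fst β
  eps : ∀ {Γ A : C}, ¬ StableInitial A → P (Γ ⨯ A) → (Γ ⟶ A)
  eps_spec : ∀ {Γ A : C} (h : ¬ StableInitial A) (ψ : P (Γ ⨯ A)),
    Sig Γ A h ψ = D.map (prod.lift (𝟙 Γ) (eps h ψ)) ψ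

/-- Elementary structure: equality predicates `δ_A` such that
`ψ ↦ π₁*ψ ⊓ π₂₃*δ_A` is left adjoint to reindexing along `id_X × Δ_A`. -/
structure Elementary [HasFiniteProducts C] [∀ A, SemilatticeInf (P A)]
    (D : Doctrine C P) where
  eq : ∀ A : C, P (A ⨯ A)
  eq_adj : ∀ (X A : C) (ψ : P (X ⨯ A)) (φ : P ((X ⨯ A) ⨯ A)),
    (D.map prod.fst ψ ⊓ D.map (prod.map prod.snd (𝟙 A)) (eq A)) ≤ φ ↔
      ψ ≤ D.map (prod.lift (𝟙 (X ⨯ A)) prod.snd) φ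

/-- An eaco: an elementary doctrine with full co-comprehension satisfying AC,
together with the compatibility of choice arrows for graphs of co-comprehension
arrows with reindexing. -/
structure Eaco [HasFiniteProducts C] [∀ A, SemilatticeInf (P A)]
    [∀ A, OrderBot (P A)] (D : Doctrine C P) where
  elem : Elementary D
  cocmp : CoComprehension D
  full : cocmp.IsFull
  ac : AxChoice D
  compat : ∀ {X A : C} (f : X ⟶ A) (α : P A)
      (h1 : ¬ StableInitial (cocmp.oObj α))
      (h2 : ¬ StableInitial (cocmp.oObj (D.map f α))),
      D.map f (D.map (prod.lift (𝟙 A)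
          (ac.eps h1 (D.map (prod.map (𝟙 A) (cocmp.oArr α)) (elem.eq A))))
        (D.map (prod.map (𝟙 A) (cocmp.oArr α)) (elem.eq A)))
      = D.map (prod.lift (𝟙 X)
          (ac.eps h2 (D.map (prod.map (𝟙 X) (cocmp.oArr (D.map f α))) (elem.eq X))))
        (D.map (prod.map (𝟙 X) (cocmp.oArr (D.map f α))) (elem.eq X))

/-- Weak power objects: the doctrine is higher order. -/
structure HigherOrder [HasFiniteProducts C] [∀ A, PartialOrder (P A)]
    (D : Doctrine C P) where
  pow : C → C
  mem : ∀ A : C, P (A ⨯ pow A)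
  classify : ∀ (A Y : C) (φ : P (A ⨯ Y)),
    ∃ χ : Y ⟶ pow A, D.map (prod.map (𝟙 A) χ) (mem A) = φ

/-- A heaco: a higher order eaco. -/
structure Heaco [HasFiniteProducts C] [∀ A, SemilatticeInf (P A)]
    [∀ A, OrderBot (P A)] (D : Doctrine C P) where
  eaco : Eaco D
  ho : HigherOrder D

/-- Implicational structure relative to right adjoints `Pi` along projections. -/
structure Implicational [HasFiniteProducts C] [∀ A, PartialOrder (P A)]
    (D : Doctrine C P) (Pi : ∀ (Γ A : C), P (Γ ⨯ A) → P Γ) where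
  imp : ∀ {A : C}, P A → P A → P A
  map_imp : ∀ {X A : C} (f : X ⟶ A) (α β : P A),
    D.map f (imp α β) = imp (D.map f α) (D.map f β)
  pi_imp : ∀ {Γ A : C} (α : P Γ) (β : P (Γ ⨯ A)),
    Pi Γ A (imp (D.map prod.fst α) β) = imp α (Pi Γ A β)
  ax_a : ∀ {A : C} (φ ψ : P A), φ ≤ imp ψ φ
  ax_b : ∀ {A : C} (γ φ ψ : P A), imp γ (imp φ ψ) ≤ imp (imp γ φ) (imp γ ψ)
  ax_c : ∀ {A : C} (γ φ ψ : P A), γ ≤ imp φ ψ → γ ≤ φ → γ ≤ ψ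
  ax_d : ∀ {A : C} (γ φ ψ : P A), φ ≤ ψ → γ ≤ imp φ ψ

/-- A tripos: a Heyting-algebra valued doctrine with `Σ` and `Π` along
projections satisfying Beck–Chevalley, equality predicates, and weak power
objects. -/
structure Tripos [HasFiniteProducts C] [∀ A, PartialOrder (P A)]
    (D : Doctrine C P) where
  inf : ∀ {A : C}, P A → P A → P A
  sup : ∀ {A : C}, P A → P A → P A
  himp : ∀ {A : C}, P A → P A → P A
  top : ∀ A : C, P A
  bot : ∀ A : C, P A
  inf_le_left : ∀ {A : C} (α β : P A), inf α β ≤ α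
  inf_le_right : ∀ {A : C} (α β : P A), inf α β ≤ β
  le_inf : ∀ {A : C} (γ α β : P A), γ ≤ α → γ ≤ β → γ ≤ inf α β
  le_sup_left : ∀ {A : C} (α β : P A), α ≤ sup α β
  le_sup_right : ∀ {A : C} (α β : P A), β ≤ sup α β
  sup_le : ∀ {A : C} (α β γ : P A), α ≤ γ → β ≤ γ → sup α β ≤ γ
  le_top : ∀ {A : C} (α : P A), α ≤ top A
  bot_le : ∀ {A : C} (α : P A), bot A ≤ α
  himp_adj : ∀ {A : C} (γ α β : P A), γ ≤ himp α β ↔ inf γ α ≤ β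
  map_inf : ∀ {X A : C} (f : X ⟶ A) (α β : P A),
    D.map f (inf α β) = inf (D.map f α) (D.map f β)
  map_sup : ∀ {X A : C} (f : X ⟶ A) (α β : P A),
    D.map f (sup α β) = sup (D.map f α) (D.map f β)
  map_himp : ∀ {X A : C} (f : X ⟶ A) (α β : P A),
    D.map f (himp α β) = himp (D.map f α) (D.map f β)
  map_top : ∀ {X A : C} (f : X ⟶ A), D.map f (top A) = top X
  map_bot : ∀ {X A : C} (f : X ⟶ A), D.map f (bot A) = bot X
  Sig : ∀ (Γ A : C), P (Γ ⨯ A) → P Γ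
  Sig_adj : ∀ {Γ A : C} (ψ : P (Γ ⨯ A)) (β : P Γ),
    Sig Γ A ψ ≤ β ↔ ψ ≤ D.map prod.fst β
  Sig_bc : ∀ {Γ Δ A : C} (f : Δ ⟶ Γ) (ψ : P (Γ ⨯ A)),
    D.map f (Sig Γ A ψ) = Sig Δ A (D.map (prod.map f (𝟙 A)) ψ)
  Pi : ∀ (Γ A : C), P (Γ ⨯ A) → P Γ
  Pi_adj : ∀ {Γ A : C} (ψ : P (Γ ⨯ A)) (β : P Γ),
    β ≤ Pi Γ A ψ ↔ D.map prod.fst β ≤ ψ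
  Pi_bc : ∀ {Γ Δ A : C} (f : Δ ⟶ Γ) (ψ : P (Γ ⨯ A)),
    D.map f (Pi Γ A ψ) = Pi Δ A (D.map (prod.map f (𝟙 A)) ψ)
  eq : ∀ X : C, P (X ⨯ X)
  eq_spec : ∀ {X : C} (α : P (X ⨯ X)),
    top X ≤ D.map (prod.lift (𝟙 X) (𝟙 X)) α ↔ eq X ≤ α
  pow : C → C
  mem : ∀ A : C, P (A ⨯ pow A)
  classify : ∀ (A Y : C) (φ : P (A ⨯ Y)),
    ∃ χ : Y ⟶ pow A, D.map (prod.map (𝟙 A) χ) (mem A) = φ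

/-- A primary doctrine with full comprehension whose reindexing
functors along comprehension arrows have left adjoints satisfying Frobenius
reciprocity is a restricted `Σ(C_P)`-doctrine, i.e. these left adjoints satisfy
the restricted Beck–Chevalley condition with respect to pullbacks of
comprehension arrows. -/
theorem statement0 {C : Type u} [Category.{v} C] [HasFiniteProducts C]
    {P : C → Type w} [∀ A, SemilatticeInf (P A)] [∀ A, OrderTop (P A)]
    (D : Doctrine C P)
    (map_inf : ∀ {X A : C} (f : X ⟶ A) (α β : P A),
      D.map f (α ⊓ β) = D.map f α ⊓ D.map f β)
    (map_top : ∀ {X A : C} (f : X ⟶ A), D.map f (⊤ : P A) = ⊤)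
    (cmp : Comprehension D) (hfull : cmp.IsFull)
    (Sigc : ∀ {A : C} (α : P A), P (cmp.cObj α) → P A)
    (adj : ∀ {A : C} (α : P A) (γ : P (cmp.cObj α)) (β : P A),
      Sigc α γ ≤ β ↔ γ ≤ D.map (cmp.cArr α) β)
    (frob : ∀ {A : C} (α : P A) (γ : P (cmp.cObj α)) (β : P A),
      Sigc α (γ ⊓ D.map (cmp.cArr α) β) = β ⊓ Sigc α γ) :
    ∀ {X A : C} (f : X ⟶ A) (α : P A)
      (q : cmp.cObj (D.map f α) ⟶ cmp.cObj α),
      q ≫ cmp.cArr α = cmp.cArr (D.map f α) ≫ f →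
      ∀ ξ : P A,
        D.map f (Sigc α (D.map (cmp.cArr α) ξ))
          = Sigc (D.map f α) (D.map q (D.map (cmp.cArr α) ξ)) := by
  intro X A f α q hq ξ
  -- Σ_α ⊤ = α
  have sig_top : ∀ {B : C} (β : P B), Sigc β (⊤ : P (cmp.cObj β)) = β := by
    intro B β
    apply le_antisymm
    · exact (adj β ⊤ β).mpr (by rw [cmp.map_cArr])
    · have h : D.map (cmp.cArr β) (Sigc β ⊤) = ⊤ :=
        le_antisymm le_top ((adj β ⊤ (Sigc β ⊤)).mp le_rfl)
      obtain ⟨k, hk, -⟩ := cmp.univ (Sigc β ⊤) (cmp.cArr β) h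
      exact hfull B β (Sigc β ⊤) k hk
  have key : ∀ {B : C} (β ζ : P B),
      Sigc β (D.map (cmp.cArr β) ζ) = ζ ⊓ β := by
    intro B β ζ
    have := frob β (⊤ : P (cmp.cObj β)) ζ
    rw [top_inf_eq, sig_top] at this
    exact this
  rw [key, ← D.map_comp, hq, D.map_comp, key, map_inf]
end

section
/- If (C,P) is a Π-doctrine with full comprehension which is also a restricted Π(C_P)-doctrine, then (C,P) is implicational, with implication defined by φ → ψ = Π_{⌊φ⌋} ⌊φ⌋* ψ. -/
open CategoryTheory CategoryTheory.Limits

universe w v u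

variable {C : Type u} [Category.{v} C] {P : C → Type w}

/-- A `Π`-doctrine with full comprehension which is also a
restricted `Π(C_P)`-doctrine is implicational, with implication given by
`φ → ψ = Π_{⌊φ⌋} ⌊φ⌋* ψ`. -/
theorem statement2 {C : Type u} [Category.{v} C] [HasFiniteProducts C]
    {P : C → Type w} [∀ A, PartialOrder (P A)] [∀ A, OrderTop (P A)]
    (D : Doctrine C P)
    -- Π-doctrine: right adjoints along projections with Beck–Chevalley
    (Pi : ∀ (Γ A : C), P (Γ ⨯ A) → P Γ)
    (Pi_adj : ∀ {Γ A : C} (ψ : P (Γ ⨯ A)) (β : P Γ),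
      β ≤ Pi Γ A ψ ↔ D.map prod.fst β ≤ ψ)
    (Pi_bc : ∀ {Γ Δ A : C} (f : Δ ⟶ Γ) (ψ : P (Γ ⨯ A)),
      D.map f (Pi Γ A ψ) = Pi Δ A (D.map (prod.map f (𝟙 A)) ψ))
    -- full comprehension
    (cmp : Comprehension D) (hfull : cmp.IsFull)
    -- restricted Π(C_P)-structure: right adjoints along comprehension arrows
    -- satisfying the restricted Beck–Chevalley condition
    (Pic : ∀ {A : C} (α : P A), P (cmp.cObj α) → P A)
    (Pic_adj : ∀ {A : C} (α : P A) (γ : P (cmp.cObj α)) (β : P A),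
      β ≤ Pic α γ ↔ D.map (cmp.cArr α) β ≤ γ)
    (Pic_bc : ∀ {X A : C} (f : X ⟶ A) (α : P A)
      (q : cmp.cObj (D.map f α) ⟶ cmp.cObj α),
      q ≫ cmp.cArr α = cmp.cArr (D.map f α) ≫ f →
      ∀ ξ : P A,
        D.map f (Pic α (D.map (cmp.cArr α) ξ))
          = Pic (D.map f α) (D.map q (D.map (cmp.cArr α) ξ))) :
    ∃ I : Implicational D Pi,
      ∀ (A : C) (φ ψ : P A), I.imp φ ψ = Pic φ (D.map (cmp.cArr φ) ψ) := by
  -- counit for Pic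
  have hcounit : ∀ (A : C) (α : P A) (γ : P (cmp.cObj α)),
      D.map (cmp.cArr α) (Pic α γ) ≤ γ :=
    fun A α γ => (Pic_adj α γ (Pic α γ)).mp le_rfl
  have hPicMono : ∀ (A : C) (α : P A) {x y : P (cmp.cObj α)}, x ≤ y →
      Pic α x ≤ Pic α y :=
    fun A α x y hxy => (Pic_adj α y (Pic α x)).mpr (le_trans (hcounit A α x) hxy)
  have hPiMono : ∀ (Γ A : C) {x y : P (Γ ⨯ A)}, x ≤ y → Pi Γ A x ≤ Pi Γ A y :=
    fun Γ A x y hxy =>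
      (Pi_adj y (Pi Γ A x)).mpr (le_trans ((Pi_adj x (Pi Γ A x)).mp le_rfl) hxy)
  -- factorization through comprehension
  have hfac : ∀ (Y A : C) (α : P A) (h : Y ⟶ A), D.map h α = ⊤ →
      ∃ m : Y ⟶ cmp.cObj α, m ≫ cmp.cArr α = h := by
    intro Y A α h hh
    obtain ⟨m, hm, -⟩ := cmp.univ α h hh
    exact ⟨m, hm⟩
  -- Beck–Chevalley in "implication" form
  have hmapimp : ∀ (X A : C) (f : X ⟶ A) (α β : P A),
      D.map f (Pic α (D.map (cmp.cArr α) β))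
        = Pic (D.map f α) (D.map (cmp.cArr (D.map f α)) (D.map f β)) := by
    intro X A f α β
    obtain ⟨q, hq⟩ := hfac _ _ α (cmp.cArr (D.map f α) ≫ f)
      (by rw [D.map_comp]; exact cmp.map_cArr (D.map f α))
    rw [Pic_bc f α q hq β]
    congr 1
    rw [← D.map_comp, hq, D.map_comp]
  -- `⌊⊤⌋` is split epi, so `Pic ⊤ ∘ ⌊⊤⌋*` is the identity
  have hPicTop : ∀ (A : C) (ξ : P A),
      Pic (⊤ : P A) (D.map (cmp.cArr (⊤ : P A)) ξ) = ξ := by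
    intro A ξ
    obtain ⟨k, hk⟩ := hfac A A (⊤ : P A) (𝟙 A) (D.map_id _)
    refine le_antisymm ?_ ((Pic_adj _ _ _).mpr le_rfl)
    have h2 := D.map_mono k (hcounit A ⊤ (D.map (cmp.cArr ⊤) ξ))
    rwa [← D.map_comp, ← D.map_comp, hk, D.map_id, D.map_id] at h2
  -- reindexing preserves top
  have hmaptop : ∀ (X A : C) (f : X ⟶ A), D.map f (⊤ : P A) = ⊤ := by
    intro X A f
    have h := hmapimp X A f ⊤ ⊤
    rw [hPicTop] at h
    refine le_antisymm le_top ?_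
    rw [h]
    refine (Pic_adj _ _ _).mpr ?_
    rw [cmp.map_cArr]
    exact le_top
  have hPicTop' : ∀ (A : C) (μ χ : P A), μ = ⊤ →
      Pic μ (D.map (cmp.cArr μ) χ) = χ := by
    rintro A μ χ rfl
    exact hPicTop A χ
  -- modus ponens for ⊤ along arbitrary arrows
  have hmp : ∀ (Y A : C) (h : Y ⟶ A) (γ φ : P A), D.map h γ = ⊤ →
      D.map h (Pic γ (D.map (cmp.cArr γ) φ)) = ⊤ → D.map h φ = ⊤ := by
    intro Y A h γ φ hγ hι
    obtain ⟨m, hm⟩ := hfac Y A γ h hγ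
    have h2 : D.map h (Pic γ (D.map (cmp.cArr γ) φ)) ≤ D.map h φ := by
      rw [← hm, D.map_comp, D.map_comp]
      exact D.map_mono m (hcounit A γ _)
    rw [hι] at h2
    exact le_antisymm le_top h2
  refine ⟨⟨fun {A} φ ψ => Pic φ (D.map (cmp.cArr φ) ψ), ?_, ?_, ?_, ?_, ?_, ?_⟩,
    fun A φ ψ => rfl⟩
  · -- map_imp
    intro X A f α β
    exact hmapimp X A f α β
  · -- pi_imp
    intro Γ A α β
    refine le_antisymm ?_ ?_
    · refine (Pic_adj _ _ _).mpr ?_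
      rw [Pi_bc, Pi_bc]
      refine hPiMono _ _ ?_
      rw [hmapimp]
      refine le_of_eq (hPicTop' _ _ _ ?_)
      rw [← D.map_comp, prod.map_fst, D.map_comp, cmp.map_cArr]
      exact hmaptop _ _ _
    · refine (Pi_adj _ _).mpr ?_
      rw [hmapimp]
      exact hPicMono _ _ (D.map_mono _ ((Pi_adj β (Pi Γ A β)).mp le_rfl))
  · -- ax_a
    intro A φ ψ
    exact (Pic_adj _ _ _).mpr le_rfl
  · -- ax_b
    intro A γ φ ψ
    beta_reduce
    refine (Pic_adj _ _ _).mpr ?_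
    conv_rhs => rw [hmapimp]
    refine (Pic_adj _ _ _).mpr ?_
    rw [← D.map_comp, ← D.map_comp]
    have hγ : D.map (cmp.cArr (D.map (cmp.cArr (Pic γ (D.map (cmp.cArr γ) φ))) γ)
        ≫ cmp.cArr (Pic γ (D.map (cmp.cArr γ) φ))) γ = ⊤ := by
      rw [D.map_comp]; exact cmp.map_cArr _
    obtain ⟨m, hm⟩ := hfac _ _ γ _ hγ
    have step1 : D.map (cmp.cArr (D.map (cmp.cArr (Pic γ (D.map (cmp.cArr γ) φ))) γ)
          ≫ cmp.cArr (Pic γ (D.map (cmp.cArr γ) φ)))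
          (Pic γ (D.map (cmp.cArr γ) (Pic φ (D.map (cmp.cArr φ) ψ))))
        ≤ D.map (cmp.cArr (D.map (cmp.cArr (Pic γ (D.map (cmp.cArr γ) φ))) γ)
          ≫ cmp.cArr (Pic γ (D.map (cmp.cArr γ) φ)))
          (Pic φ (D.map (cmp.cArr φ) ψ)) := by
      conv_lhs => rw [← hm]
      conv_rhs => rw [← hm]
      rw [D.map_comp, D.map_comp]
      exact D.map_mono m (hcounit _ _ _)
    refine le_trans step1 ?_
    rw [hmapimp]
    refine le_of_eq (hPicTop' _ _ _ ?_)
    exact hmp _ _ _ γ φ hγ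
      (by rw [D.map_comp, cmp.map_cArr]; exact hmaptop _ _ _)
  · -- ax_c
    intro A γ φ ψ h1 h2
    have hφ : D.map (cmp.cArr γ) φ = ⊤ := le_antisymm le_top (by
      have := D.map_mono (cmp.cArr γ) h2; rwa [cmp.map_cArr] at this)
    have hι : D.map (cmp.cArr γ) (Pic φ (D.map (cmp.cArr φ) ψ)) = ⊤ :=
      le_antisymm le_top (by
        have := D.map_mono (cmp.cArr γ) h1; rwa [cmp.map_cArr] at this)
    have hψ : D.map (cmp.cArr γ) ψ = ⊤ := hmp _ _ _ φ ψ hφ hι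
    obtain ⟨k, hk⟩ := hfac _ _ ψ (cmp.cArr γ) hψ
    exact hfull A γ ψ k hk
  · -- ax_d
    intro A γ φ ψ h
    refine (Pic_adj _ _ _).mpr ?_
    have hψ : D.map (cmp.cArr φ) ψ = ⊤ := le_antisymm le_top (by
      have := D.map_mono (cmp.cArr φ) h; rwa [cmp.map_cArr] at this)
    rw [hψ]
    exact le_top
end

section
/- In a Π-doctrine with comprehension, the assignment (α,β) ↦ Π_{⌊α⌋}⌊α⌋*β provides an implicational structure if and only if the comprehension is full. -/
open CategoryTheory CategoryTheory.Limits

universe w v u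

variable {C : Type u} [Category.{v} C] {P : C → Type w}

/-! With `φ ⇒ ψ := Π_{⌊φ⌋}⌊φ⌋*ψ`, one has `γ ≤ φ ⇒ ψ` iff `⌊φ⌋*γ ≤ ⌊φ⌋*ψ`. Since `⌊⊤⌋` has a
section, `⊤ ⇒ ψ = ψ`; with the Beck–Chevalley condition this gives stability, compatibility with
`Π` along projections and the axioms other than modus ponens for any comprehension. Modus ponens is
fullness: from `γ ≤ φ` the arrow `⌊γ⌋` factors through `⌊φ⌋`, so `γ ≤ φ ⇒ ψ` forces `⌊γ⌋*ψ = ⊤`,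
i.e. `⌊γ⌋` factors through `⌊ψ⌋`; conversely, if `⌊α⌋ = g ≫ ⌊β⌋` then `⌊α⌋*β = g*⊤ = ⊤`
(reindexing preserves `⊤ = ⊤ ⇒ ⊤` by stability), so `α ≤ α ⇒ β`. -/

namespace Comprehension

variable [∀ A, PartialOrder (P A)] [∀ A, OrderTop (P A)] {D : Doctrine C P}
  (cmp : Comprehension D)

theorem map_cArr_top {A : C} (α : P A) : D.map (cmp.cArr α) ⊤ = ⊤ :=
  top_unique (cmp.map_cArr α ▸ D.map_mono _ le_top)

theorem map_cArr_eq_top_of_le {A : C} {α β : P A} (h : α ≤ β) :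
    D.map (cmp.cArr α) β = ⊤ :=
  top_unique (cmp.map_cArr α ▸ D.map_mono _ h)

theorem exists_comp_cArr_top_eq_id (A : C) :
    ∃ s : A ⟶ cmp.cObj (⊤ : P A), s ≫ cmp.cArr ⊤ = 𝟙 A :=
  (cmp.univ ⊤ (𝟙 A) (D.map_id ⊤)).exists

theorem exists_comp_cArr_eq_of_le {A : C} {α β : P A} (h : α ≤ β) :
    ∃ k : cmp.cObj α ⟶ cmp.cObj β, k ≫ cmp.cArr β = cmp.cArr α :=
  (cmp.univ β (cmp.cArr α) (cmp.map_cArr_eq_top_of_le h)).exists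

theorem exists_comp_cArr_eq_cArr_map {X A : C} (f : X ⟶ A) (α : P A) :
    ∃ q : cmp.cObj (D.map f α) ⟶ cmp.cObj α,
      q ≫ cmp.cArr α = cmp.cArr (D.map f α) ≫ f :=
  (cmp.univ α _ (by rw [D.map_comp, cmp.map_cArr])).exists

/-- Right adjoints `Π_{⌊α⌋}` to reindexing along comprehension arrows, with Beck–Chevalley
restricted to predicates of the form `⌊α⌋*ξ`. -/
structure PiStructure where
  pi : ∀ {A : C} (α : P A), P (cmp.cObj α) → P A
  le_pi_iff : ∀ {A : C} (α : P A) (γ : P (cmp.cObj α)) (β : P A),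
    β ≤ pi α γ ↔ D.map (cmp.cArr α) β ≤ γ
  map_pi : ∀ {X A : C} (f : X ⟶ A) (α : P A) (q : cmp.cObj (D.map f α) ⟶ cmp.cObj α),
    q ≫ cmp.cArr α = cmp.cArr (D.map f α) ≫ f → ∀ ξ : P A,
      D.map f (pi α (D.map (cmp.cArr α) ξ)) = pi (D.map f α) (D.map q (D.map (cmp.cArr α) ξ))

namespace PiStructure

variable {cmp} (R : cmp.PiStructure)

def imp {A : C} (φ ψ : P A) : P A :=
  R.pi φ (D.map (cmp.cArr φ) ψ)

theorem le_imp_iff {A : C} (γ φ ψ : P A) :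
    γ ≤ R.imp φ ψ ↔ D.map (cmp.cArr φ) γ ≤ D.map (cmp.cArr φ) ψ :=
  R.le_pi_iff φ _ γ

theorem map_cArr_imp_le {A : C} (φ ψ : P A) :
    D.map (cmp.cArr φ) (R.imp φ ψ) ≤ D.map (cmp.cArr φ) ψ :=
  (R.le_imp_iff _ φ ψ).1 le_rfl

theorem le_imp {A : C} (φ ψ : P A) : φ ≤ R.imp ψ φ :=
  (R.le_imp_iff φ ψ φ).2 le_rfl

theorem imp_mono_right {A : C} (φ : P A) {ξ ψ : P A} (h : ξ ≤ ψ) : R.imp φ ξ ≤ R.imp φ ψ :=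
  (R.le_imp_iff _ φ ψ).2 ((R.map_cArr_imp_le φ ξ).trans (D.map_mono _ h))

theorem imp_of_le {A : C} {φ ψ : P A} (h : φ ≤ ψ) (γ : P A) : γ ≤ R.imp φ ψ :=
  (R.le_imp_iff γ φ ψ).2 (cmp.map_cArr_eq_top_of_le h ▸ le_top)

theorem imp_top {A : C} (ψ : P A) : R.imp ⊤ ψ = ψ := by
  refine le_antisymm ?_ (R.le_imp ψ ⊤)
  obtain ⟨s, hs⟩ := cmp.exists_comp_cArr_top_eq_id A
  have := D.map_mono s (R.map_cArr_imp_le ⊤ ψ)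
  rwa [← D.map_comp, ← D.map_comp, hs, D.map_id, D.map_id] at this

theorem map_imp {X A : C} (f : X ⟶ A) (φ ψ : P A) :
    D.map f (R.imp φ ψ) = R.imp (D.map f φ) (D.map f ψ) := by
  obtain ⟨q, hq⟩ := cmp.exists_comp_cArr_eq_cArr_map f φ
  rw [imp, imp, R.map_pi f φ q hq ψ, ← D.map_comp, hq, D.map_comp]

theorem map_top (R : cmp.PiStructure) {X A : C} (f : X ⟶ A) : D.map f (⊤ : P A) = ⊤ := by
  rw [← R.imp_top ⊤, R.map_imp]
  exact top_unique (R.imp_of_le le_rfl ⊤)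

theorem map_cArr_imp_self {A : C} (φ ψ : P A) :
    D.map (cmp.cArr φ) (R.imp φ ψ) = D.map (cmp.cArr φ) ψ := by
  rw [R.map_imp, cmp.map_cArr, R.imp_top]

theorem imp_imp_le_imp_of_top_le_imp {A : C} {γ φ : P A} (h : ⊤ ≤ R.imp γ φ) (ψ : P A) :
    R.imp γ (R.imp φ ψ) ≤ R.imp γ ψ := by
  have hφ : D.map (cmp.cArr γ) φ = ⊤ := by
    rw [← R.map_cArr_imp_self]
    exact top_unique ((cmp.map_cArr_top γ).symm.le.trans (D.map_mono _ h))
  rw [le_imp_iff, map_cArr_imp_self, map_imp, hφ, imp_top]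

theorem imp_imp_le_imp_imp_imp {A : C} (γ φ ψ : P A) :
    R.imp γ (R.imp φ ψ) ≤ R.imp (R.imp γ φ) (R.imp γ ψ) := by
  rw [le_imp_iff, map_imp, map_imp, map_imp]
  apply imp_imp_le_imp_of_top_le_imp
  rw [← map_imp, cmp.map_cArr]

theorem modusPonens_iff :
    (∀ {A : C} (γ φ ψ : P A), γ ≤ R.imp φ ψ → γ ≤ φ → γ ≤ ψ) ↔ cmp.IsFull := by
  constructor
  · intro mp A α β g hg
    have hβ : D.map (cmp.cArr α) β = ⊤ := by
      rw [← hg, D.map_comp, cmp.map_cArr, R.map_top]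
    exact mp α α β ((R.le_imp_iff _ _ _).2 (by rw [hβ]; exact le_top)) le_rfl
  · intro hfull A γ φ ψ hγφψ hγφ
    obtain ⟨k, hk⟩ := cmp.exists_comp_cArr_eq_of_le hγφ
    have hγψ := D.map_mono k ((R.le_imp_iff _ _ _).1 hγφψ)
    rw [← D.map_comp, ← D.map_comp, hk, cmp.map_cArr] at hγψ
    obtain ⟨g, hg⟩ := (cmp.univ ψ (cmp.cArr γ) (top_unique hγψ)).exists
    exact hfull A γ ψ g hg

section Products

variable [HasFiniteProducts C] (Pi : ∀ (Γ A : C), P (Γ ⨯ A) → P Γ)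

theorem pi_imp
    (Pi_adj : ∀ {Γ A : C} (ψ : P (Γ ⨯ A)) (β : P Γ),
      β ≤ Pi Γ A ψ ↔ D.map prod.fst β ≤ ψ)
    (Pi_bc : ∀ {Γ Δ A : C} (f : Δ ⟶ Γ) (ψ : P (Γ ⨯ A)),
      D.map f (Pi Γ A ψ) = Pi Δ A (D.map (prod.map f (𝟙 A)) ψ))
    {Γ A : C} (α : P Γ) (β : P (Γ ⨯ A)) :
    Pi Γ A (R.imp (D.map prod.fst α) β) = R.imp α (Pi Γ A β) := by
  refine le_antisymm ?_ ?_
  · rw [le_imp_iff, Pi_bc, Pi_bc, Pi_adj]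
    set m := prod.map (cmp.cArr α) (𝟙 A)
    calc D.map prod.fst (Pi _ A (D.map m (R.imp (D.map prod.fst α) β)))
        ≤ D.map m (R.imp (D.map prod.fst α) β) := (Pi_adj _ _).1 le_rfl
      _ = R.imp ⊤ (D.map m β) := by
        rw [R.map_imp, ← D.map_comp, prod.map_fst, D.map_comp, cmp.map_cArr, R.map_top]
      _ = D.map m β := R.imp_top _
  · rw [Pi_adj, R.map_imp]
    exact R.imp_mono_right _ ((Pi_adj _ _).1 le_rfl)

def implicational
    (Pi_adj : ∀ {Γ A : C} (ψ : P (Γ ⨯ A)) (β : P Γ),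
      β ≤ Pi Γ A ψ ↔ D.map prod.fst β ≤ ψ)
    (Pi_bc : ∀ {Γ Δ A : C} (f : Δ ⟶ Γ) (ψ : P (Γ ⨯ A)),
      D.map f (Pi Γ A ψ) = Pi Δ A (D.map (prod.map f (𝟙 A)) ψ))
    (hfull : cmp.IsFull) : Implicational D Pi where
  imp := R.imp
  map_imp := R.map_imp
  pi_imp := R.pi_imp Pi Pi_adj Pi_bc
  ax_a := R.le_imp
  ax_b := R.imp_imp_le_imp_imp_imp
  ax_c := R.modusPonens_iff.2 hfull
  ax_d _ _ _ h := R.imp_of_le h _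

end Products

end PiStructure

end Comprehension

/-- In a `Π`-doctrine with comprehension (with right adjoints along
comprehension arrows satisfying the restricted Beck–Chevalley condition), the
assignment `(α,β) ↦ Π_{⌊α⌋}⌊α⌋*β` provides an implicational structure if and
only if comprehension is full. -/
theorem statement3 {C : Type u} [Category.{v} C] [HasFiniteProducts C]
    {P : C → Type w} [∀ A, PartialOrder (P A)] [∀ A, OrderTop (P A)]
    (D : Doctrine C P)
    (Pi : ∀ (Γ A : C), P (Γ ⨯ A) → P Γ)
    (Pi_adj : ∀ {Γ A : C} (ψ : P (Γ ⨯ A)) (β : P Γ),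
      β ≤ Pi Γ A ψ ↔ D.map prod.fst β ≤ ψ)
    (Pi_bc : ∀ {Γ Δ A : C} (f : Δ ⟶ Γ) (ψ : P (Γ ⨯ A)),
      D.map f (Pi Γ A ψ) = Pi Δ A (D.map (prod.map f (𝟙 A)) ψ))
    (cmp : Comprehension D)
    (Pic : ∀ {A : C} (α : P A), P (cmp.cObj α) → P A)
    (Pic_adj : ∀ {A : C} (α : P A) (γ : P (cmp.cObj α)) (β : P A),
      β ≤ Pic α γ ↔ D.map (cmp.cArr α) β ≤ γ)
    (Pic_bc : ∀ {X A : C} (f : X ⟶ A) (α : P A)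
      (q : cmp.cObj (D.map f α) ⟶ cmp.cObj α),
      q ≫ cmp.cArr α = cmp.cArr (D.map f α) ≫ f →
      ∀ ξ : P A,
        D.map f (Pic α (D.map (cmp.cArr α) ξ))
          = Pic (D.map f α) (D.map q (D.map (cmp.cArr α) ξ))) :
    (∃ I : Implicational D Pi,
      ∀ (A : C) (φ ψ : P A), I.imp φ ψ = Pic φ (D.map (cmp.cArr φ) ψ))
    ↔ cmp.IsFull := by
  let R : cmp.PiStructure := ⟨Pic, Pic_adj, Pic_bc⟩
  constructor
  · rintro ⟨I, hI⟩
    refine R.modusPonens_iff.1 fun γ φ ψ h => I.ax_c γ φ ψ ?_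
    rwa [hI]
  · intro hfull
    exact ⟨R.implicational Pi Pi_adj Pi_bc hfull, fun _ _ _ => rfl⟩
end

section
/- Let (C,P) be a doctrine with full comprehension and negation. Then (C,P) has full co-comprehension (via ⌈α⌉ = ⌊¬α⌋) if and only if (C,P) is classical, i.e. ¬¬α = α for all α. -/
open CategoryTheory CategoryTheory.Limits

universe w v u

variable {C : Type u} [Category.{v} C] {P : C → Type w}

/-- For a doctrine with full comprehension and negation, the
co-comprehension `⌈α⌉ = ⌊¬α⌋` is full if and only if the doctrine is classical
(`¬¬α = α`). -/
theorem statement6 {C : Type u} [Category.{v} C] [HasFiniteProducts C]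
    {P : C → Type w} [∀ A, SemilatticeInf (P A)] [∀ A, OrderTop (P A)]
    [∀ A, OrderBot (P A)]
    (D : Doctrine C P)
    (map_inf : ∀ {X A : C} (f : X ⟶ A) (α β : P A),
      D.map f (α ⊓ β) = D.map f α ⊓ D.map f β)
    (map_top : ∀ {X A : C} (f : X ⟶ A), D.map f (⊤ : P A) = ⊤)
    (map_bot : ∀ {X A : C} (f : X ⟶ A), D.map f (⊥ : P A) = ⊥)
    (cmp : Comprehension D) (hfull : cmp.IsFull)
    (neg : ∀ {A : C}, P A → P A)
    (neg_adj : ∀ {A : C} (α β : P A), α ≤ neg β ↔ α ⊓ β = ⊥)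
    (map_neg : ∀ {X A : C} (f : X ⟶ A) (α : P A),
      D.map f (neg α) = neg (D.map f α)) :
    -- fullness of co-comprehension ↔ classicality
    (∀ (A : C) (α β : P A) (g : cmp.cObj (neg β) ⟶ cmp.cObj (neg α)),
        g ≫ cmp.cArr (neg α) = cmp.cArr (neg β) → α ≤ β)
    ↔ (∀ (A : C) (α : P A), neg (neg α) = α) := by
  -- basic facts about negation
  have hbot : ∀ {A : C} (α : P A), neg α ⊓ α = ⊥ := fun α =>
    (neg_adj _ _).mp le_rfl
  have le_nn : ∀ {A : C} (α : P A), α ≤ neg (neg α) := fun α =>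
    (neg_adj _ _).mpr (by rw [inf_comm]; exact hbot α)
  have anti : ∀ {A : C} {α β : P A}, α ≤ β → neg β ≤ neg α := by
    intro A α β h
    exact (neg_adj _ _).mpr (le_bot_iff.mp (le_trans (inf_le_inf_left _ h)
      (le_of_eq (hbot β))))
  constructor
  · intro hco A α
    refine le_antisymm ?_ (le_nn α)
    -- construct arrow from cObj (neg α) to cObj (neg (neg (neg α)))
    have h1 : neg α ≤ neg (neg (neg α)) := le_nn (neg α)
    have htop : D.map (cmp.cArr (neg α)) (neg (neg (neg α))) = ⊤ :=
      top_unique (by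
        rw [← cmp.map_cArr (neg α)]
        exact D.map_mono _ h1)
    obtain ⟨k, hk, -⟩ := cmp.univ (neg (neg (neg α))) (cmp.cArr (neg α)) htop
    exact hco A (neg (neg α)) α k hk
  · intro hcl A α β g hg
    have h := hfull A (neg β) (neg α) g hg
    have h2 := anti h
    rwa [hcl A α, hcl A β] at h2
end

section
/- Full comprehension together with full co-comprehension does not imply the existence of a negation: the doctrine (Top, op) of open sets of topological spaces has full comprehension and full co-comprehension (via the subspace inclusions U ↪ X and U^c ↪ X) but does not have a negation operation. -/
open CategoryTheory CategoryTheory.Limits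

universe w v u

variable {C : Type u} [Category.{v} C] {P : C → Type w}

open TopologicalSpace in
/-- The doctrine `(Top, op)` of open sets over the category of topological
spaces, with reindexing by inverse image. -/
def topDoctrine : Doctrine TopCat (fun X => Opens X) where
  map f α := Opens.comap f.hom α
  map_mono f _ _ h := OrderHomClass.mono (Opens.comap f.hom) h
  map_id α := by
    show Opens.comap (ContinuousMap.id _) α = α
    rw [Opens.comap_id]; rfl
  map_comp f g α := by
    show Opens.comap (g.hom.comp f.hom) α = _
    rw [Opens.comap_comp]; rfl

open TopologicalSpace in
/-- The subspace inclusion `U ↪ X` of an open set. -/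
noncomputable def openIncl (X : TopCat) (U : Opens X) : TopCat.of U ⟶ X :=
  TopCat.ofHom ⟨Subtype.val, continuous_subtype_val⟩

open TopologicalSpace in
/-- The subspace inclusion `Uᶜ ↪ X` of the closed complement of an open set. -/
noncomputable def closedIncl (X : TopCat) (U : Opens X) :
    TopCat.of (↑(↑U)ᶜ : Set X) ⟶ X :=
  TopCat.ofHom ⟨Subtype.val, continuous_subtype_val⟩

/-
Both comprehensions are subspace inclusions, and a continuous map factors (uniquely, since
inclusions are injective) through the inclusion of a subspace exactly when its image lies in it.
Open sets form a Heyting algebra, so a negation would have to be the pseudo-complement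
`¬U = interior Uᶜ`. Inverse image along the constant map at a boundary point `0` of
`U = (0, ∞) ⊆ ℝ` sends `¬U = (-∞, 0)` to `∅`, but sends `U` to `∅` and hence `¬U` should go to
the whole (nonempty) domain.
-/

open TopologicalSpace

noncomputable def subspaceIncl (X : TopCat) (s : Set X) : TopCat.of s ⟶ X :=
  TopCat.ofHom ⟨Subtype.val, continuous_subtype_val⟩

lemma existsUnique_comp_subspaceIncl {X Y : TopCat} {s : Set X} (f : Y ⟶ X)
    (hf : ∀ y, f y ∈ s) : ∃! k : Y ⟶ TopCat.of s, k ≫ subspaceIncl X s = f :=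
  ⟨TopCat.ofHom ⟨fun y => ⟨f y, hf y⟩, by fun_prop⟩, rfl, fun k hk => by
    ext y
    exact congr($hk y)⟩

lemma subset_of_comp_subspaceIncl {X : TopCat} {s t : Set X} (g : TopCat.of s ⟶ TopCat.of t)
    (hg : g ≫ subspaceIncl X t = subspaceIncl X s) : s ⊆ t := fun x hx => by
  have hgx : (g ⟨x, hx⟩).1 = x := congr($hg ⟨x, hx⟩)
  exact hgx ▸ (g ⟨x, hx⟩).2

lemma topDoctrine_map_eq_top_iff {X Y : TopCat} (f : Y ⟶ X) (U : Opens X) :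
    topDoctrine.map f U = ⊤ ↔ ∀ y, f y ∈ U := by
  rw [← SetLike.coe_set_eq]
  exact Set.eq_univ_iff_forall

lemma topDoctrine_map_eq_bot_iff {X Y : TopCat} (f : Y ⟶ X) (U : Opens X) :
    topDoctrine.map f U = ⊥ ↔ ∀ y, f y ∉ U := by
  rw [← SetLike.coe_set_eq]
  exact Set.eq_empty_iff_forall_notMem

lemma eq_compl_of_forall_le_iff {α : Type*} [HeytingAlgebra α] {a n : α}
    (h : ∀ v, v ≤ n ↔ v ⊓ a = ⊥) : n = aᶜ :=
  eq_of_forall_le_iff fun v => by rw [h, le_compl_iff_disjoint_right, disjoint_iff]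

lemma topDoctrine_map_const_compl_ne (X : TopCat) [Nonempty X] {Y : TopCat} (U : Opens Y) {y : Y}
    (hy : y ∈ closure (U : Set Y)) (hyU : y ∉ U) :
    topDoctrine.map (TopCat.ofHom (ContinuousMap.const X y)) Uᶜ ≠
      (topDoctrine.map (TopCat.ofHom (ContinuousMap.const X y)) U)ᶜ := by
  have hcompl : y ∉ Uᶜ := by
    rw [← SetLike.mem_coe, Opens.coe_compl_eq_interior_compl, interior_compl]
    exact fun h => h hy
  rw [(topDoctrine_map_eq_bot_iff _ Uᶜ).2 fun _ => hcompl,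
    (topDoctrine_map_eq_bot_iff _ U).2 fun _ => hyU, compl_bot]
  exact bot_ne_top

lemma exists_mem_closure_notMem_opens :
    ∃ (Y : TopCat.{u}) (U : Opens Y) (y : Y), y ∈ closure (U : Set Y) ∧ y ∉ U := by
  let e : ULift.{u} ℝ ≃ₜ ℝ := Homeomorph.ulift
  refine ⟨TopCat.of (ULift ℝ), ⟨e ⁻¹' Set.Ioi 0, isOpen_Ioi.preimage e.continuous⟩,
    ULift.up 0, ?_, fun h => lt_irrefl (0 : ℝ) h⟩
  change ULift.up 0 ∈ closure (e ⁻¹' Set.Ioi 0)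
  rw [← e.preimage_closure, closure_Ioi]
  exact Set.self_mem_Ici

open TopologicalSpace in
/-- The doctrine `(Top, op)` has full comprehension and full
co-comprehension, given by the subspace inclusions `U ↪ X` and `Uᶜ ↪ X`
respectively, but it does not have a negation operation. -/
theorem statement7 :
    -- comprehension via `U ↪ X`
    (∀ (X : TopCat) (U : Opens X),
      topDoctrine.map (openIncl X U) U = ⊤ ∧
      ∀ (Y : TopCat) (f : Y ⟶ X), topDoctrine.map f U = ⊤ →
        ∃! k : Y ⟶ TopCat.of U, k ≫ openIncl X U = f) ∧
    -- fullness of comprehension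
    (∀ (X : TopCat) (U V : Opens X) (g : TopCat.of U ⟶ TopCat.of V),
      g ≫ openIncl X V = openIncl X U → U ≤ V) ∧
    -- co-comprehension via `Uᶜ ↪ X`
    (∀ (X : TopCat) (U : Opens X),
      topDoctrine.map (closedIncl X U) U = ⊥ ∧
      ∀ (Y : TopCat) (f : Y ⟶ X), topDoctrine.map f U = ⊥ →
        ∃! k : Y ⟶ TopCat.of (↑(↑U)ᶜ : Set X), k ≫ closedIncl X U = f) ∧
    -- fullness of co-comprehension
    (∀ (X : TopCat) (U V : Opens X)
      (g : TopCat.of (↑(↑V)ᶜ : Set X) ⟶ TopCat.of (↑(↑U)ᶜ : Set X)),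
      g ≫ closedIncl X U = closedIncl X V → U ≤ V) ∧
    -- no negation operation stable under inverse image
    ¬ ∃ neg : ∀ X : TopCat, Opens X → Opens X,
        (∀ (X : TopCat) (U V : Opens X), V ≤ neg X U ↔ V ⊓ U = ⊥) ∧
        (∀ (X Y : TopCat) (f : X ⟶ Y) (U : Opens Y),
          topDoctrine.map f (neg Y U) = neg X (topDoctrine.map f U)) := by
  refine ⟨fun X U => ⟨?_, fun Y f hf => ?_⟩, fun X U V g hg => ?_,
    fun X U => ⟨?_, fun Y f hf => ?_⟩, fun X U V g hg => ?_, ?_⟩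
  · exact (topDoctrine_map_eq_top_iff _ U).2 fun x => x.2
  · exact existsUnique_comp_subspaceIncl f ((topDoctrine_map_eq_top_iff f U).1 hf)
  · exact subset_of_comp_subspaceIncl g hg
  · exact (topDoctrine_map_eq_bot_iff _ U).2 fun x => x.2
  · exact existsUnique_comp_subspaceIncl f ((topDoctrine_map_eq_bot_iff f U).1 hf)
  · exact Set.compl_subset_compl.1 (subset_of_comp_subspaceIncl g hg)
  · rintro ⟨neg, hneg, hstab⟩
    have neg_eq_compl (X : TopCat) (U : Opens X) : neg X U = Uᶜ :=
      eq_compl_of_forall_le_iff (hneg X U)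
    obtain ⟨Y, U, y, hy, hyU⟩ := exists_mem_closure_notMem_opens
    have hconst := hstab (TopCat.of PUnit) Y (TopCat.ofHom (ContinuousMap.const _ y)) U
    simp only [neg_eq_compl] at hconst
    exact topDoctrine_map_const_compl_ne (TopCat.of PUnit) U hy hyU hconst
end

section
/- If a doctrine (C,P) validates the axiom of choice, the base C has a stable initial object 0, and all posets P(A) are nonempty, then every arrow k : X → 0 in C is an isomorphism (assuming C is non-degenerate, i.e. there is no arrow 1 → 0). -/
open CategoryTheory CategoryTheory.Limits

universe w v u

variable {C : Type u} [Category.{v} C] {P : C → Type w}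

namespace CategoryTheory.Limits

noncomputable def IsInitial.ofRetract {X Y : C} (h : Retract X Y) (hY : IsInitial Y) :
    IsInitial X :=
  IsInitial.ofUniqueHom (fun W => h.i ≫ hY.to W) fun W m => by
    rw [← Category.id_comp m, ← h.retract, Category.assoc, hY.hom_ext (h.r ≫ m) (hY.to W)]

end CategoryTheory.Limits

theorem StableInitial.isIso_to [HasFiniteProducts C] {Z : C} (hZ : StableInitial Z)
    {X : C} (k : X ⟶ Z) : IsIso k := by
  obtain ⟨⟨hI⟩, hstable⟩ := hZ
  obtain ⟨e⟩ := hstable X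
  -- `X` is a retract of the initial object `X ⨯ Z` via `⟨𝟙, k⟩` and the first projection.
  have hX : IsInitial X := (hI.ofIso e.symm).ofRetract
    { i := prod.lift (𝟙 X) k, r := prod.fst, retract := prod.lift_fst _ _ }
  exact isIso_of_isInitial hX hI k

theorem statement8_general {C : Type u} [Category.{v} C] [HasFiniteProducts C]
    (Z : C) (hZ : StableInitial Z)
    {X : C} (k : X ⟶ Z) : IsIso k :=
  hZ.isIso_to k

/-- If a doctrine validates AC, the base has a stable initial
object, all fibers are nonempty, and the base is non-degenerate (no arrow
`1 ⟶ 0`), then every arrow `k : X ⟶ 0` into the stable initial object is an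
isomorphism. -/
theorem statement8 {C : Type u} [Category.{v} C] [HasFiniteProducts C]
    {P : C → Type w} [∀ A, PartialOrder (P A)]
    (D : Doctrine C P) (ac : AxChoice D)
    (Z : C) (hZ : StableInitial Z)
    (hne : ∀ A : C, Nonempty (P A))
    (hnd : ¬ Nonempty ((⊤_ C) ⟶ Z))
    {X : C} (k : X ⟶ Z) : IsIso k :=
  statement8_general Z hZ k
end

section
/- Suppose (C,P) satisfies AC, every P(A) has a bottom element that is preserved by reindexing, and P(0) is a singleton whenever 0 is a stable initial object. Then (C,P) is a Σ-doctrine: the left adjoints Σ_{π_Γ} along all product projections exist and satisfy the Beck–Chevalley condition with respect to the class of product projections. -/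
open CategoryTheory CategoryTheory.Limits

universe w v u

variable {C : Type u} [Category.{v} C] {P : C → Type w}

/-- A doctrine satisfying AC, with fiberwise bottom elements
preserved by reindexing and with `P(0)` a singleton for every stable initial
object `0`, is a `Σ`-doctrine: left adjoints along all product projections
exist and satisfy the Beck–Chevalley condition. -/
theorem statement10 {C : Type u} [Category.{v} C] [HasFiniteProducts C]
    {P : C → Type w} [∀ A, PartialOrder (P A)] [∀ A, OrderBot (P A)]
    (D : Doctrine C P)
    (map_bot : ∀ {X A : C} (f : X ⟶ A), D.map f (⊥ : P A) = ⊥)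
    (ac : AxChoice D)
    (hsing : ∀ Z : C, StableInitial Z → Subsingleton (P Z)) :
    ∃ Sig : ∀ (Γ A : C), P (Γ ⨯ A) → P Γ,
      (∀ (Γ A : C) (ψ : P (Γ ⨯ A)) (β : P Γ),
        Sig Γ A ψ ≤ β ↔ ψ ≤ D.map prod.fst β) ∧
      (∀ (Γ Δ A : C) (f : Δ ⟶ Γ) (ψ : P (Γ ⨯ A)),
        D.map f (Sig Γ A ψ) = Sig Δ A (D.map (prod.map f (𝟙 A)) ψ)) := by
  classical
  -- products with a stable initial object are stable initial
  have stprod : ∀ (Γ A : C), StableInitial A → StableInitial (Γ ⨯ A) := by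
    rintro Γ A ⟨⟨hi⟩, hst⟩
    obtain ⟨e⟩ := hst Γ
    refine ⟨⟨hi.ofIso e.symm⟩, fun X => ?_⟩
    obtain ⟨e2⟩ := hst X
    exact ⟨(prod.mapIso (Iso.refl X) e).trans (e2.trans e.symm)⟩
  -- the unit of the adjunction
  have unit : ∀ {Γ A : C} (h : ¬ StableInitial A) (ψ : P (Γ ⨯ A)),
      ψ ≤ D.map prod.fst (ac.Sig Γ A h ψ) :=
    fun h ψ => (ac.adj h ψ _).mp le_rfl
  -- reindexing along a section of the projection is below Sig
  have sec_le : ∀ {Γ A : C} (h : ¬ StableInitial A) (g : Γ ⟶ A) (ψ : P (Γ ⨯ A)),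
      D.map (prod.lift (𝟙 Γ) g) ψ ≤ ac.Sig Γ A h ψ := by
    intro Γ A h g ψ
    have := D.map_mono (prod.lift (𝟙 Γ) g) (unit h ψ)
    rwa [← D.map_comp, prod.lift_fst, D.map_id] at this
  refine ⟨fun Γ A ψ => if h : StableInitial A then ⊥ else ac.Sig Γ A h ψ,
    fun Γ A ψ β => ?_, fun Γ Δ A f ψ => ?_⟩
  · by_cases h : StableInitial A
    · simp only [dif_pos h]
      have : Subsingleton (P (Γ ⨯ A)) := hsing _ (stprod Γ A h)
      constructor
      · intro _; exact le_of_eq (Subsingleton.elim _ _)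
      · intro _; exact bot_le
    · simp only [dif_neg h]
      exact ac.adj h ψ β
  · by_cases h : StableInitial A
    · simp only [dif_pos h, map_bot]
    · simp only [dif_neg h]
      apply le_antisymm
      · -- use the choice arrow
        rw [ac.eps_spec h ψ, ← D.map_comp]
        have hc : f ≫ prod.lift (𝟙 Γ) (ac.eps h ψ)
            = prod.lift (𝟙 Δ) (f ≫ ac.eps h ψ) ≫ prod.map f (𝟙 A) := by
          ext <;> simp
        rw [hc, D.map_comp]
        exact sec_le h _ _
      · rw [ac.adj h]
        have : (prod.map f (𝟙 A) : Δ ⨯ A ⟶ Γ ⨯ A) ≫ prod.fst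
            = prod.fst ≫ f := by simp
        rw [← D.map_comp, ← this, D.map_comp]
        exact D.map_mono _ (unit h ψ)
end

section
/- A primary doctrine satisfying AC, with bottom elements preserved by reindexing and P(0) a singleton for a stable initial object 0, is existential: it is a Σ-doctrine and the left adjoints Σ_{π_Γ} satisfy Frobenius reciprocity, Σ_{π_Γ}(φ ∧ π_Γ*β) = β ∧ Σ_{π_Γ}φ. -/
open CategoryTheory CategoryTheory.Limits

universe w v u

variable {C : Type u} [Category.{v} C] {P : C → Type w}

/-- A primary doctrine satisfying AC, with fiberwise bottom
elements preserved by reindexing and with `P(0)` a singleton for every stable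
initial object `0`, is existential: it is a `Σ`-doctrine whose left adjoints
along projections satisfy Frobenius reciprocity. -/
theorem statement11 {C : Type u} [Category.{v} C] [HasFiniteProducts C]
    {P : C → Type w} [∀ A, SemilatticeInf (P A)] [∀ A, OrderBot (P A)]
    (D : Doctrine C P)
    (map_inf : ∀ {X A : C} (f : X ⟶ A) (α β : P A),
      D.map f (α ⊓ β) = D.map f α ⊓ D.map f β)
    (map_bot : ∀ {X A : C} (f : X ⟶ A), D.map f (⊥ : P A) = ⊥)
    (ac : AxChoice D)
    (hsing : ∀ Z : C, StableInitial Z → Subsingleton (P Z)) :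
    ∃ Sig : ∀ (Γ A : C), P (Γ ⨯ A) → P Γ,
      (∀ (Γ A : C) (ψ : P (Γ ⨯ A)) (β : P Γ),
        Sig Γ A ψ ≤ β ↔ ψ ≤ D.map prod.fst β) ∧
      (∀ (Γ Δ A : C) (f : Δ ⟶ Γ) (ψ : P (Γ ⨯ A)),
        D.map f (Sig Γ A ψ) = Sig Δ A (D.map (prod.map f (𝟙 A)) ψ)) ∧
      (∀ (Γ A : C) (ψ : P (Γ ⨯ A)) (β : P Γ),
        Sig Γ A (ψ ⊓ D.map prod.fst β) = β ⊓ Sig Γ A ψ) := by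
  classical
  -- products with a stable initial object are stable initial
  have stab : ∀ (Γ A : C), StableInitial A → StableInitial (Γ ⨯ A) := by
    intro Γ A ⟨⟨hA⟩, hX⟩
    obtain ⟨e⟩ := hX Γ
    refine ⟨⟨hA.ofIso e.symm⟩, fun X => ?_⟩
    obtain ⟨eX⟩ := hX X
    exact ⟨prod.mapIso (Iso.refl X) e ≪≫ eX ≪≫ e.symm⟩
  -- key: reindexing along a section ⟨id, g⟩ is below Sig
  have lift_le : ∀ {Γ A : C} (h : ¬ StableInitial A) (ψ : P (Γ ⨯ A)) (g : Γ ⟶ A),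
      D.map (prod.lift (𝟙 Γ) g) ψ ≤ ac.Sig Γ A h ψ := by
    intro Γ A h ψ g
    have h1 : ψ ≤ D.map prod.fst (ac.Sig Γ A h ψ) := (ac.adj h ψ _).mp le_rfl
    have h2 := D.map_mono (prod.lift (𝟙 Γ) g) h1
    rwa [← D.map_comp, prod.lift_fst, D.map_id] at h2
  refine ⟨fun Γ A ψ => if h : StableInitial A then ⊥ else ac.Sig Γ A h ψ,
    ?_, ?_, ?_⟩
  · -- adjunction
    intro Γ A ψ β
    by_cases h : StableInitial A
    · dsimp only; rw [dif_pos h]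
      have := hsing (Γ ⨯ A) (stab Γ A h)
      exact ⟨fun _ => le_of_eq (Subsingleton.elim _ _), fun _ => bot_le⟩
    · dsimp only; rw [dif_neg h]; exact ac.adj h ψ β
  · -- Beck–Chevalley
    intro Γ Δ A f ψ
    by_cases h : StableInitial A
    · dsimp only; rw [dif_pos h, dif_pos h, map_bot]
    · dsimp only; rw [dif_neg h, dif_neg h]
      refine le_antisymm ?_ ?_
      · rw [ac.eps_spec h ψ, ← D.map_comp]
        have hcomp : f ≫ prod.lift (𝟙 Γ) (ac.eps h ψ) =
            prod.lift (𝟙 Δ) (f ≫ ac.eps h ψ) ≫ prod.map f (𝟙 A) := by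
          apply Limits.prod.hom_ext <;> simp
        rw [hcomp, D.map_comp]
        exact lift_le h _ _
      · rw [ac.adj h]
        have h1 : ψ ≤ D.map prod.fst (ac.Sig Γ A h ψ) := (ac.adj h ψ _).mp le_rfl
        have h2 := D.map_mono (prod.map f (𝟙 A)) h1
        rw [← D.map_comp, prod.map_fst] at h2
        rwa [← D.map_comp]
  · -- Frobenius
    intro Γ A ψ β
    by_cases h : StableInitial A
    · dsimp only; rw [dif_pos h, dif_pos h, inf_bot_eq]
    · dsimp only; rw [dif_neg h, dif_neg h]
      refine le_antisymm ?_ ?_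
      · rw [ac.adj h, map_inf]
        have h1 : ψ ≤ D.map prod.fst (ac.Sig Γ A h ψ) := (ac.adj h ψ _).mp le_rfl
        exact le_inf (inf_le_right.trans le_rfl)
          (inf_le_left.trans h1)
      · rw [ac.eps_spec h ψ]
        have hβ : β = D.map (prod.lift (𝟙 Γ) (ac.eps h ψ)) (D.map prod.fst β) := by
          rw [← D.map_comp, prod.lift_fst, D.map_id]
        calc β ⊓ D.map (prod.lift (𝟙 Γ) (ac.eps h ψ)) ψ
            = D.map (prod.lift (𝟙 Γ) (ac.eps h ψ)) (ψ ⊓ D.map prod.fst β) := by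
              rw [map_inf, ← hβ, inf_comm]
          _ ≤ ac.Sig Γ A h (ψ ⊓ D.map prod.fst β) := lift_le h _ _
end

section
/- Every eaco is an existential doctrine: all reindexing functors along product projections have left adjoints satisfying the Beck–Chevalley condition and Frobenius reciprocity. -/
open CategoryTheory CategoryTheory.Limits

universe w v u

variable {C : Type u} [Category.{v} C] {P : C → Type w}

/-!
Along a projection `Γ × A ⟶ Γ` with `A` not stably initial, the choice arrows turn `Σ` into a
reindexing, which commutes with reindexing and with `⊓`: this is Beck–Chevalley and Frobenius.
When `A` is stably initial, `Γ × A` is initial, its fibre is a point by fullness of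
co-comprehension, and `Σ := ⊥` works as soon as reindexing preserves `⊥`.

That is the real content. For `β = f*⊥` with co-comprehension `o : ⌈β⌉ ⟶ X`, the compatibility
condition yields `β ≤ δ(x, o(ε x))`; as `o*β = ⊥`, substitutivity of equality forces `β ≤ ⊥`.
The non-degeneracy side conditions hold for projections out of non-initial objects, and an arrow
`f : Δ ⟶ Γ` is the projection `Γ × Δ ⟶ Γ` precomposed with the split mono `⟨f, id⟩`.
-/

noncomputable def CategoryTheory.Limits.IsInitial.ofRetract_s14 {I Y : C} (hI : IsInitial I)
    (s : Y ⟶ I) (r : I ⟶ Y) (hs : s ≫ r = 𝟙 Y) : IsInitial Y :=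
  IsInitial.ofUniqueHom (fun W => s ≫ hI.to W) fun W m => by
    rw [← Category.id_comp m, ← hs, Category.assoc, hI.hom_ext (r ≫ m) (hI.to W)]

section StableInitial

variable [HasFiniteProducts C]

noncomputable def StableInitial.isInitialProd {A : C} (hA : StableInitial A) (Γ : C) :
    IsInitial (Γ ⨯ A) :=
  hA.1.some.ofIso (hA.2 Γ).some.symm

noncomputable def StableInitial.isInitialOfHom {A Y : C} (hA : StableInitial A) (k : Y ⟶ A) :
    IsInitial Y :=
  (hA.isInitialProd Y).ofRetract_s14 (prod.lift (𝟙 Y) k) prod.fst (prod.lift_fst _ _)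

end StableInitial

namespace Doctrine

variable [∀ A, PartialOrder (P A)] [∀ A, OrderBot (P A)] (D : Doctrine C P)

lemma map_bot_of_comp_eq_id {X Y : C} (s : X ⟶ Y) (r : Y ⟶ X) (hs : s ≫ r = 𝟙 X) :
    D.map s ⊥ = ⊥ :=
  le_bot_iff.mp <| calc
    D.map s ⊥ ≤ D.map s (D.map r ⊥) := D.map_mono s bot_le
    _ = ⊥ := by rw [← D.map_comp, hs, D.map_id]

lemma map_bot_of_map_fst_bot [HasFiniteProducts C] {Δ Γ : C} (f : Δ ⟶ Γ)
    (h : D.map (prod.fst : Γ ⨯ Δ ⟶ Γ) ⊥ = ⊥) : D.map f ⊥ = ⊥ := by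
  rw [← prod.lift_fst f (𝟙 Δ), D.map_comp, h,
    D.map_bot_of_comp_eq_id _ prod.snd (prod.lift_snd _ _)]

end Doctrine

def Doctrine.PreservesInf [∀ A, SemilatticeInf (P A)] (D : Doctrine C P) : Prop :=
  ∀ {X A : C} (f : X ⟶ A) (α β : P A), D.map f (α ⊓ β) = D.map f α ⊓ D.map f β

namespace Elementary

variable [HasFiniteProducts C] [∀ A, SemilatticeInf (P A)] {D : Doctrine C P}
  (El : Elementary D)

/-- The paper's `G(g) = (g × id)*δ`, with the factors swapped as in `Eaco.compat`. -/
noncomputable def graph {X Y : C} (g : Y ⟶ X) : P (X ⨯ Y) :=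
  D.map (prod.map (𝟙 X) g) (El.eq X)

lemma map_lift_graph {X Y : C} (g : Y ⟶ X) (ε : X ⟶ Y) :
    D.map (prod.lift (𝟙 X) ε) (El.graph g) = D.map (prod.lift (𝟙 X) (ε ≫ g)) (El.eq X) := by
  rw [graph, ← D.map_comp, prod.lift_map, Category.comp_id]

lemma refl {Y A : C} (u : Y ⟶ A) (ψ : P Y) : ψ ≤ D.map (prod.lift u u) (El.eq A) := by
  have hunit := (El.eq_adj Y A (D.map prod.fst ψ) _).mp le_rfl
  have h := D.map_mono (prod.lift (𝟙 Y) u) (hunit.trans (D.map_mono _ inf_le_right))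
  simpa only [← D.map_comp, prod.lift_fst, D.map_id, prod.lift_map, Category.id_comp,
    Category.comp_id, prod.comp_lift, prod.lift_snd] using h

lemma subst_param (hD : D.PreservesInf) {Y X A : C} (w : Y ⟶ X) (u v : Y ⟶ A)
    (φ : P ((X ⨯ A) ⨯ A)) :
    D.map (prod.lift (prod.lift w u) u) φ ⊓ D.map (prod.lift u v) (El.eq A) ≤
      D.map (prod.lift (prod.lift w u) v) φ := by
  have h := D.map_mono (prod.lift (prod.lift w u) v) ((El.eq_adj X A _ φ).mpr le_rfl)
  rw [hD] at h
  simpa only [← D.map_comp, prod.comp_lift, Category.comp_id, prod.lift_fst,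
    prod.lift_fst_assoc, prod.lift_snd, prod.lift_map] using h

lemma subst (hD : D.PreservesInf) {Y A : C} (u v : Y ⟶ A) (θ : P A) :
    D.map u θ ⊓ D.map (prod.lift u v) (El.eq A) ≤ D.map v θ := by
  simpa only [← D.map_comp, prod.lift_snd] using El.subst_param hD u u v (D.map prod.snd θ)

lemma symm (hD : D.PreservesInf) {Y A : C} (u v : Y ⟶ A) :
    D.map (prod.lift u v) (El.eq A) ≤ D.map (prod.lift v u) (El.eq A) := by
  have h := El.subst_param hD u u v (D.map (prod.lift prod.snd (prod.fst ≫ prod.snd)) (El.eq A))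
  simp only [← D.map_comp, prod.comp_lift, prod.lift_snd, prod.lift_fst_assoc] at h
  exact (le_inf (El.refl u _) le_rfl).trans h

end Elementary

namespace AxChoice

variable [HasFiniteProducts C]

section PartialOrder

variable [∀ A, PartialOrder (P A)] {D : Doctrine C P} (ac : AxChoice D) {Γ A : C}
  (h : ¬ StableInitial A)

lemma map_lift_le_Sig (ψ : P (Γ ⨯ A)) (u : Γ ⟶ A) :
    D.map (prod.lift (𝟙 Γ) u) ψ ≤ ac.Sig Γ A h ψ := by
  simpa only [← D.map_comp, prod.lift_fst, D.map_id] using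
    D.map_mono (prod.lift (𝟙 Γ) u) ((ac.adj h ψ _).mp le_rfl)

lemma map_Sig {Δ : C} (f : Δ ⟶ Γ) (ψ : P (Γ ⨯ A)) :
    D.map f (ac.Sig Γ A h ψ) = ac.Sig Δ A h (D.map (prod.map f (𝟙 A)) ψ) := by
  refine le_antisymm ?_ ((ac.adj h _ _).mpr ?_)
  · have hf : f ≫ prod.lift (𝟙 Γ) (ac.eps h ψ) =
        prod.lift (𝟙 Δ) (f ≫ ac.eps h ψ) ≫ prod.map f (𝟙 A) := by
      rw [prod.lift_map, prod.comp_lift, Category.id_comp, Category.comp_id, Category.comp_id]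
    rw [ac.eps_spec h ψ, ← D.map_comp, hf, D.map_comp]
    exact ac.map_lift_le_Sig h _ _
  · simpa only [← D.map_comp, prod.map_fst] using
      D.map_mono (prod.map f (𝟙 A)) ((ac.adj h ψ _).mp le_rfl)

end PartialOrder

lemma Sig_inf_map_fst [∀ A, SemilatticeInf (P A)] {D : Doctrine C P} (hD : D.PreservesInf)
    (ac : AxChoice D) {Γ A : C} (h : ¬ StableInitial A) (ψ : P (Γ ⨯ A)) (β : P Γ) :
    ac.Sig Γ A h (ψ ⊓ D.map prod.fst β) = β ⊓ ac.Sig Γ A h ψ := by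
  refine le_antisymm (le_inf ((ac.adj h _ _).mpr inf_le_right)
    ((ac.adj h _ _).mpr (inf_le_left.trans ((ac.adj h ψ _).mp le_rfl)))) ?_
  calc β ⊓ ac.Sig Γ A h ψ
      = D.map (prod.lift (𝟙 Γ) (ac.eps h ψ)) (ψ ⊓ D.map prod.fst β) := by
        rw [hD, ← D.map_comp, prod.lift_fst, D.map_id, ac.eps_spec h ψ, inf_comm]
    _ ≤ ac.Sig Γ A h (ψ ⊓ D.map prod.fst β) := ac.map_lift_le_Sig h _ _

end AxChoice

namespace CoComprehension

variable [∀ A, PartialOrder (P A)] [∀ A, OrderBot (P A)] {D : Doctrine C P}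

lemma IsFull.subsingleton {co : CoComprehension D} (full : co.IsFull) {Z : C}
    (hZ : IsInitial Z) : Subsingleton (P Z) where
  allEq α β := by
    have hle : ∀ γ δ : P Z, γ ≤ δ := fun γ δ =>
      full Z γ δ (co.oArr δ ≫ hZ.to (co.oObj γ)) (by
        rw [Category.assoc, hZ.hom_ext (hZ.to _ ≫ co.oArr γ) (𝟙 Z), Category.comp_id])
    exact le_antisymm (hle α β) (hle β α)

lemma not_stableInitial_oObj [HasFiniteProducts C] (co : CoComprehension D) {X Y : C} {α : P X}
    (hY : ¬ Nonempty (IsInitial Y)) (g : Y ⟶ X) (hg : D.map g α = ⊥) :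
    ¬ StableInitial (co.oObj α) := fun hα =>
  hY ⟨hα.isInitialOfHom (co.univ α g hg).exists.choose⟩

end CoComprehension

section Existential

variable [HasFiniteProducts C] [∀ A, SemilatticeInf (P A)] [∀ A, OrderBot (P A)]
  {D : Doctrine C P}

lemma Elementary.le_bot_of_le_map_lift_graph (El : Elementary D) (hD : D.PreservesInf)
    (co : CoComprehension D) {X : C} {β : P X} (ε : X ⟶ co.oObj β)
    (h : β ≤ D.map (prod.lift (𝟙 X) ε) (El.graph (co.oArr β))) : β ≤ ⊥ := by
  rw [El.map_lift_graph] at h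
  have hβ : β ≤ D.map (ε ≫ co.oArr β) β := by
    simpa only [D.map_id] using (le_inf (D.map_id β).ge h).trans (El.subst hD _ _ β)
  have hβ_bot : D.map (ε ≫ co.oArr β) β ≤ D.map (ε ≫ co.oArr β) ⊥ := by
    rw [D.map_comp, D.map_comp, co.map_oArr]
    exact D.map_mono ε bot_le
  simpa only [D.map_id] using
    (le_inf (hβ.trans hβ_bot) (h.trans (El.symm hD _ _))).trans (El.subst hD _ (𝟙 X) ⊥)

namespace Eaco

lemma map_bot_of_not_stableInitial (E : Eaco D) (hD : D.PreservesInf) {X Γ : C} (f : X ⟶ Γ)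
    (hΓ : ¬ StableInitial (E.cocmp.oObj (⊥ : P Γ)))
    (hX : ¬ StableInitial (E.cocmp.oObj (D.map f ⊥))) : D.map f ⊥ = ⊥ :=
  le_bot_iff.mp <| E.elem.le_bot_of_le_map_lift_graph hD E.cocmp _ <|
    E.compat f ⊥ hΓ hX ▸ D.map_mono f bot_le

lemma map_fst_bot (E : Eaco D) (hD : D.PreservesInf) {Γ A : C} (hΓ : ¬ Nonempty (IsInitial Γ))
    (hA : ¬ StableInitial A) : D.map (prod.fst : Γ ⨯ A ⟶ Γ) ⊥ = ⊥ :=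
  E.map_bot_of_not_stableInitial hD _
    (E.cocmp.not_stableInitial_oObj hΓ (𝟙 Γ) (D.map_id _))
    (E.cocmp.not_stableInitial_oObj hΓ (prod.lift (𝟙 Γ) (E.ac.eps hA ⊥))
      (by rw [← D.map_comp, prod.lift_fst, D.map_id]))

lemma map_bot (E : Eaco D) (hD : D.PreservesInf) {Δ Γ : C} (f : Δ ⟶ Γ) : D.map f ⊥ = ⊥ := by
  by_cases hΔ : Nonempty (IsInitial Δ)
  · exact (E.full.subsingleton hΔ.some).elim _ _
  have map_bot_of_not_isInitial {Γ' : C} (g : Δ ⟶ Γ') (hΓ' : ¬ Nonempty (IsInitial Γ')) :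
      D.map g ⊥ = ⊥ :=
    D.map_bot_of_map_fst_bot g (E.map_fst_bot hD hΓ' fun hΔ' => hΔ hΔ'.1)
  by_cases hΓ : Nonempty (IsInitial Γ)
  · rw [(E.full.subsingleton hΓ.some).elim ⊥ (D.map (hΓ.some.to Δ) ⊥), ← D.map_comp,
      map_bot_of_not_isInitial _ hΔ]
  · exact map_bot_of_not_isInitial f hΓ

open Classical in
noncomputable def Sig (E : Eaco D) (Γ A : C) (ψ : P (Γ ⨯ A)) : P Γ :=
  if h : StableInitial A then ⊥ else E.ac.Sig Γ A h ψ

lemma Sig_le_iff (E : Eaco D) {Γ A : C} (ψ : P (Γ ⨯ A)) (β : P Γ) :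
    E.Sig Γ A ψ ≤ β ↔ ψ ≤ D.map prod.fst β := by
  by_cases h : StableInitial A
  · have := E.full.subsingleton (h.isInitialProd Γ)
    simp only [Sig, dif_pos h, bot_le, Subsingleton.elim ψ (D.map prod.fst β), le_refl]
  · simpa only [Sig, dif_neg h] using E.ac.adj h ψ β

lemma map_Sig (E : Eaco D) (hD : D.PreservesInf) {Γ Δ A : C} (f : Δ ⟶ Γ) (ψ : P (Γ ⨯ A)) :
    D.map f (E.Sig Γ A ψ) = E.Sig Δ A (D.map (prod.map f (𝟙 A)) ψ) := by
  by_cases h : StableInitial A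
  · simpa only [Sig, dif_pos h] using E.map_bot hD f
  · simpa only [Sig, dif_neg h] using E.ac.map_Sig h f ψ

lemma Sig_inf_map_fst (E : Eaco D) (hD : D.PreservesInf) {Γ A : C} (ψ : P (Γ ⨯ A))
    (β : P Γ) : E.Sig Γ A (ψ ⊓ D.map prod.fst β) = β ⊓ E.Sig Γ A ψ := by
  by_cases h : StableInitial A
  · simp only [Sig, dif_pos h, inf_bot_eq]
  · simpa only [Sig, dif_neg h] using E.ac.Sig_inf_map_fst hD h ψ β

end Eaco

end Existential

/-- Every eaco is an existential doctrine: all reindexing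
functors along product projections have left adjoints satisfying the
Beck–Chevalley condition and Frobenius reciprocity. -/
theorem statement14 {C : Type u} [Category.{v} C] [HasFiniteProducts C]
    {P : C → Type w} [∀ A, SemilatticeInf (P A)] [∀ A, OrderBot (P A)]
    (D : Doctrine C P)
    (map_inf : ∀ {X A : C} (f : X ⟶ A) (α β : P A),
      D.map f (α ⊓ β) = D.map f α ⊓ D.map f β)
    (E : Eaco D) :
    ∃ Sig : ∀ (Γ A : C), P (Γ ⨯ A) → P Γ,
      (∀ (Γ A : C) (ψ : P (Γ ⨯ A)) (β : P Γ),
        Sig Γ A ψ ≤ β ↔ ψ ≤ D.map prod.fst β) ∧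
      (∀ (Γ Δ A : C) (f : Δ ⟶ Γ) (ψ : P (Γ ⨯ A)),
        D.map f (Sig Γ A ψ) = Sig Δ A (D.map (prod.map f (𝟙 A)) ψ)) ∧
      (∀ (Γ A : C) (ψ : P (Γ ⨯ A)) (β : P Γ),
        Sig Γ A (ψ ⊓ D.map prod.fst β) = β ⊓ Sig Γ A ψ) :=
  ⟨E.Sig, fun _ _ => E.Sig_le_iff, fun _ _ _ => E.map_Sig @map_inf,
    fun _ _ => E.Sig_inf_map_fst @map_inf⟩
end
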